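/- arXiv:2605.09930 — 2 statements merged into one kernel-verified Lean document; each statement's English description precedes it below -/
import Mathlib

section
/- Consider three agents and seven items o_1,...,o_7. The conflict graph consists of the complete bipartite graph K_{3,3} with parts X = {o_1, o_2, o_3} and Y = {o_4, o_5, o_6}, together with the two edges {o_1, o_7} and {o_4, o_7}. All three agents share the valuation v defined by: v(∅) = 0; v(S) = 1 if S = {o_1} or S = {o_4}; v(S) = 2 for every other singleton S; v(S) = 3 if S ∈ {{o_2,o_7}, {o_3,o_7}, {o_5,o_7}, {o_6,o_7}}; and v(S) = 4 for every other subset S of the items. Then v is monotone non-decreasing, and no allocation (A_1, A_2, A_3) is both maximal and EF1. -/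
/-- Conflict graph on seven items o_1,...,o_7 (indexed 0,...,6): the complete bipartite
graph between X = {0,1,2} and Y = {3,4,5}, plus the edges {0,6} and {3,6}. -/
def adj13 (i j : Fin 7) : Prop :=
  (i.val < 3 ∧ 3 ≤ j.val ∧ j.val < 6) ∨ (j.val < 3 ∧ 3 ≤ i.val ∧ i.val < 6) ∨
  (i.val = 0 ∧ j.val = 6) ∨ (j.val = 0 ∧ i.val = 6) ∨
  (i.val = 3 ∧ j.val = 6) ∨ (j.val = 3 ∧ i.val = 6)

/-- The identical monotone valuation of the three agents. -/
noncomputable def v13 (S : Finset (Fin 7)) : ℝ :=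
  if S = ∅ then 0
  else if S = {0} ∨ S = {3} then 1
  else if S.card = 1 then 2
  else if S = {1, 6} ∨ S = {2, 6} ∨ S = {4, 6} ∨ S = {5, 6} then 3
  else 4

/-! Both claims are finite checks, settled by kernel computation once it is made small:
valuations are compared through an `ℕ`-valued copy of `v13`, removing at most one item means
removing nothing or a single item, and bundles range over the 22 independent sets of the
conflict graph instead of all 128 subsets, with disjointness tested before the third bundle is
chosen. -/

section FairDivision

variable {α ι β : Type*}

def IsIndependent (r : α → α → Prop) (s : Finset α) : Prop :=
  ∀ x ∈ s, ∀ y ∈ s, ¬ r x y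

def IsMaximalAllocation (r : α → α → Prop) (A : ι → Finset α) : Prop :=
  ∀ o, (∀ i, o ∉ A i) → ∀ i, ∃ x ∈ A i, r o x

instance {r : α → α → Prop} [DecidableRel r] (s : Finset α) : Decidable (IsIndependent r s) :=
  inferInstanceAs (Decidable (∀ x ∈ s, ∀ y ∈ s, ¬ r x y))

variable [DecidableEq α]

instance [Fintype α] [Fintype ι] {r : α → α → Prop} [DecidableRel r] (A : ι → Finset α) :
    Decidable (IsMaximalAllocation r A) :=
  inferInstanceAs (Decidable (∀ o, (∀ i, o ∉ A i) → ∀ i, ∃ x ∈ A i, r o x))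

def EnvyFreeUpToOne [LE β] (v : Finset α → β) (s t : Finset α) : Prop :=
  ∃ S ⊆ s ∪ t, S.card ≤ 1 ∧ v (t \ S) ≤ v (s \ S)

theorem envyFreeUpToOne_iff [LE β] {v : Finset α → β} {s t : Finset α} :
    EnvyFreeUpToOne v s t ↔ v t ≤ v s ∨ ∃ x ∈ s ∪ t, v (t \ {x}) ≤ v (s \ {x}) := by
  constructor
  · rintro ⟨S, hS, hcard, hv⟩
    rcases S.eq_empty_or_nonempty with rfl | ⟨x, hx⟩
    · left
      simpa using hv
    · obtain rfl : S = {x} := Finset.eq_singleton_iff_unique_mem.2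
        ⟨hx, fun y hy => Finset.card_le_one.1 hcard y hy x hx⟩
      exact Or.inr ⟨x, hS (Finset.mem_singleton_self x), hv⟩
  · rintro (hv | ⟨x, hx, hv⟩)
    · exact ⟨∅, Finset.empty_subset _, by simp, by simpa using hv⟩
    · exact ⟨{x}, Finset.singleton_subset_iff.2 hx, (Finset.card_singleton x).le, hv⟩

theorem envyFreeUpToOne_comp_iff {γ : Type*} [LE β] [LE γ] {f : β → γ}
    (hf : ∀ a b, f a ≤ f b ↔ a ≤ b) {v : Finset α → β} {s t : Finset α} :
    EnvyFreeUpToOne (f ∘ v) s t ↔ EnvyFreeUpToOne v s t := by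
  simp only [EnvyFreeUpToOne, Function.comp_apply, hf]

instance [LE β] [DecidableLE β] (v : Finset α → β) (s t : Finset α) :
    Decidable (EnvyFreeUpToOne v s t) :=
  decidable_of_iff _ envyFreeUpToOne_iff.symm

def IsEF1Allocation [LE β] (v : Finset α → β) (A : ι → Finset α) : Prop :=
  ∀ i j, EnvyFreeUpToOne v (A i) (A j)

instance [Fintype ι] [LE β] [DecidableLE β] (v : Finset α → β) (A : ι → Finset α) :
    Decidable (IsEF1Allocation v A) :=
  inferInstanceAs (Decidable (∀ i j, EnvyFreeUpToOne v (A i) (A j)))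

end FairDivision

instance : DecidableRel adj13 := fun i j => by unfold adj13; infer_instance

def v13Nat (S : Finset (Fin 7)) : ℕ :=
  if S = ∅ then 0
  else if S = {0} ∨ S = {3} then 1
  else if S.card = 1 then 2
  else if S = {1, 6} ∨ S = {2, 6} ∨ S = {4, 6} ∨ S = {5, 6} then 3
  else 4

theorem v13_eq_natCast : v13 = Nat.cast ∘ v13Nat := by
  funext S
  simp only [Function.comp_apply, v13, v13Nat]
  split_ifs <;> norm_num

theorem v13Nat_mono : ∀ S T : Finset (Fin 7), S ⊆ T → v13Nat S ≤ v13Nat T := by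
  decide +kernel

def independentSets13 : List (Finset (Fin 7)) :=
  [∅, {0}, {1}, {2}, {3}, {4}, {5}, {6}, {0, 1}, {0, 2}, {1, 2}, {1, 6}, {2, 6}, {3, 4}, {3, 5},
    {4, 5}, {4, 6}, {5, 6}, {0, 1, 2}, {1, 2, 6}, {3, 4, 5}, {4, 5, 6}]

theorem mem_independentSets13_of_isIndependent :
    ∀ s : Finset (Fin 7), IsIndependent adj13 s → s ∈ independentSets13 := by
  decide +kernel

theorem not_isEF1Allocation_of_mem_independentSets13 :
    ∀ a ∈ independentSets13, ∀ b ∈ independentSets13, Disjoint a b →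
    ∀ c ∈ independentSets13, Disjoint a c → Disjoint b c →
    IsMaximalAllocation adj13 ![a, b, c] →
    ¬ IsEF1Allocation v13Nat ![a, b, c] := by
  decide +kernel

theorem not_isEF1Allocation_of_isMaximalAllocation (A : Fin 3 → Finset (Fin 7))
    (hdisj : ∀ i j, i ≠ j → Disjoint (A i) (A j)) (hind : ∀ i, IsIndependent adj13 (A i))
    (hmax : IsMaximalAllocation adj13 A) :
    ¬ IsEF1Allocation v13Nat A := by
  have hmem i := mem_independentSets13_of_isIndependent (A i) (hind i)
  have hA : A = ![A 0, A 1, A 2] := by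
    ext i : 1
    fin_cases i <;> rfl
  rw [hA] at hmax ⊢
  exact not_isEF1Allocation_of_mem_independentSets13 _ (hmem 0) _ (hmem 1)
    (hdisj 0 1 (by decide)) _ (hmem 2) (hdisj 0 2 (by decide)) (hdisj 1 2 (by decide)) hmax

/-- v13 is monotone non-decreasing, and no allocation among three agents is
both maximal and EF1. -/
theorem stmt_13 :
    (∀ S T : Finset (Fin 7), S ⊆ T → v13 S ≤ v13 T) ∧
    ¬ ∃ A : Fin 3 → Finset (Fin 7),
      (∀ i j : Fin 3, i ≠ j → Disjoint (A i) (A j)) ∧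
      (∀ i : Fin 3, ∀ x ∈ A i, ∀ y ∈ A i, ¬ adj13 x y) ∧
      (∀ o : Fin 7, (∀ i : Fin 3, o ∉ A i) → ∀ i : Fin 3, ∃ x ∈ A i, adj13 o x) ∧
      (∀ i j : Fin 3, ∃ S : Finset (Fin 7), S ⊆ A i ∪ A j ∧ S.card ≤ 1 ∧
        v13 (A i \ S) ≥ v13 (A j \ S)) := by
  rw [v13_eq_natCast]
  refine ⟨fun S T hST => Nat.cast_le.2 (v13Nat_mono S T hST), ?_⟩
  rintro ⟨A, hdisj, hind, hmax, hef1⟩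
  refine not_isEF1Allocation_of_isMaximalAllocation A hdisj hind hmax fun i j => ?_
  exact (envyFreeUpToOne_comp_iff (f := ((↑) : ℕ → ℝ)) fun _ _ => Nat.cast_le).1 (hef1 i j)
end

section
/- For every finite tree T = (V, E), every vertex r ∈ V, and every positive integer n, there exists a maximal equitable n-coloring (S_1,...,S_n) of T such that either r ∈ V \ (S_1 ∪ ... ∪ S_n), or r belongs to some S_i with |S_i| = max_{j∈{1,...,n}} |S_j| (i.e., r receives a color of maximum class size or is uncolored). -/
/-!
Root the tree at `r` and colour, by induction, every vertex set `W` that contains `r` and the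
parent of each of its vertices, keeping `r` uncoloured or in a largest class `j`. Let `u` be a
deepest vertex of `W`, `p` its parent and `C` the children of `p`, all leaves. If `p = r`, `W`
is a star: leave `r` uncoloured and spread `C` evenly when `n ≤ |C|`, otherwise give every vertex
its own colour. If `p ≠ r`, colour `W' = W \ ({p} ∪ C)` first. When `n ≤ |C|`, leave `p`
uncoloured and spread `C` evenly over all classes, so that `p` sees every colour. When `|C| < n`,
give `p` and the leaves distinct colours of `|C| + 1` classes, `p` avoiding the colour of its
parent, the only neighbour it has in `W'`. Both steps add one vertex to each of some `k` smallest
classes; preferring `j` among classes of equal size keeps the sizes equitable and `j` largest.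
-/

open Finset

namespace Finset

theorem exists_card_eq_forall_le {ι β : Type*} [Fintype ι] [DecidableEq ι] [LinearOrder β]
    (f : ι → β) : ∀ {k : ℕ}, k ≤ Fintype.card ι →
      ∃ I : Finset ι, #I = k ∧ ∀ i ∈ I, ∀ i' ∉ I, f i ≤ f i'
  | 0, _ => ⟨∅, rfl, by simp⟩
  | k + 1, hk => by
    obtain ⟨I, hI, hle⟩ := exists_card_eq_forall_le f (k := k) (by omega)
    obtain ⟨m, hm, hmin⟩ := Iᶜ.exists_min_image f (by rw [← card_pos, card_compl]; omega)
    rw [mem_compl] at hm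
    refine ⟨insert m I, by rw [card_insert_of_notMem hm, hI], ?_⟩
    simp only [mem_insert, not_or, forall_eq_or_imp]
    exact ⟨fun i' hi' => hmin i' (mem_compl.2 hi'.2), fun i hi i' hi' => hle i hi i' hi'.2⟩

theorem exists_card_fiber_eq {X ι : Type*} [DecidableEq X] [Fintype ι] [DecidableEq ι]
    [Nonempty ι] (C : Finset X) :
    ∀ d : ι → ℕ, ∑ i, d i = #C → ∃ g : X → ι, ∀ i, #{x ∈ C | g x = i} = d i := by
  induction C using Finset.induction_on with
  | empty =>
    intro d hd
    exact ⟨fun _ => Classical.arbitrary ι, fun i => by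
      simpa using (sum_eq_zero_iff.mp hd i (mem_univ i)).symm⟩
  | insert a C ha ih =>
    intro d hd
    rw [card_insert_of_notMem ha] at hd
    obtain ⟨i, -, hi⟩ := exists_ne_zero_of_sum_ne_zero (s := univ) (f := d) (by omega)
    have hsplit := add_sum_erase univ d (mem_univ i)
    obtain ⟨g, hg⟩ := ih (Function.update d i (d i - 1)) (by
      rw [sum_update_of_mem (mem_univ i), sdiff_singleton_eq_erase]
      omega)
    refine ⟨Function.update g a i, fun k => ?_⟩
    have hC : {x ∈ C | Function.update g a i x = k} = {x ∈ C | g x = k} :=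
      filter_congr fun x hx => by rw [Function.update_of_ne (ne_of_mem_of_not_mem hx ha)]
    rw [filter_insert, Function.update_self, hC]
    split_ifs with hik
    · subst hik
      rw [card_insert_of_notMem (fun h => ha (mem_filter.1 h).1), hg, Function.update_self]
      omega
    · rw [hg, Function.update_of_ne (Ne.symm hik)]

end Finset

namespace SimpleGraph

variable {V : Type*} {G : SimpleGraph V}

def IsRootedSubtree (G : SimpleGraph V) (r : V) (W : Finset V) : Prop :=
  r ∈ W ∧ ∀ v ∈ W, v ≠ r → ∃ w ∈ W, G.Adj v w ∧ G.dist r w + 1 = G.dist r v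

theorem Connected.exists_adj_dist_add_one_eq (hG : G.Connected) {r x : V} (hx : x ≠ r) :
    ∃ w, G.Adj x w ∧ G.dist r w + 1 = G.dist r x := by
  obtain ⟨p, hp⟩ := hG.exists_walk_length_eq_dist x r
  obtain ⟨w, hxw, q, rfl⟩ := Walk.exists_eq_cons_of_ne hx p
  refine ⟨w, hxw, ?_⟩
  have hq : G.dist w r ≤ q.length := dist_le q
  have htri : G.dist x r ≤ G.dist x w + G.dist w r := hG.dist_triangle
  rw [dist_eq_one_iff_adj.2 hxw] at htri
  rw [Walk.length_cons] at hp
  rw [dist_comm (u := r), dist_comm (u := r)]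
  omega

theorem IsTree.eq_of_adj_of_dist_add_one_eq (hT : G.IsTree) (r : V) {x w y : V}
    (hw : G.Adj x w) (hy : G.Adj x y) (hdw : G.dist r w + 1 = G.dist r x)
    (hdy : G.dist r y + 1 = G.dist r x) : w = y := by
  classical
  obtain ⟨q, hq, -⟩ := hT.connected.exists_path_of_dist r x
  suffices h : ∀ z, G.Adj x z → G.dist r z + 1 = G.dist r x → z = q.penultimate from
    (h w hw hdw).trans (h y hy hdy).symm
  intro z hz hdz
  refine hT.isAcyclic.eq_penultimate_of_adj_end hq hz (by_contra fun hzq => ?_)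
  obtain ⟨pz, hpz, hpzlen⟩ := hT.connected.exists_path_of_dist r z
  -- a geodesic to `z` would have to pass through the deeper vertex `x`
  have hx := hT.isAcyclic.mem_support_of_ne_mem_support_of_adj_of_isPath hpz hq hz.symm hzq
  have := (dist_le (pz.takeUntil x hx)).trans (pz.length_takeUntil_le_length hx)
  omega

theorem IsTree.eq_of_adj_of_dist_le (hT : G.IsTree) (r : V) {w p x : V} (hwp : G.Adj w p)
    (hdp : G.dist r p + 1 = G.dist r w) (hwx : G.Adj w x) (hdx : G.dist r x ≤ G.dist r w) :
    x = p := by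
  rcases hT.dist_eq_dist_add_one_of_adj r hwx with h | h
  · exact hT.eq_of_adj_of_dist_add_one_eq r hwx hwp h.symm hdp
  · omega

theorem Connected.isRootedSubtree_univ [Fintype V] (hG : G.Connected) (r : V) :
    G.IsRootedSubtree r univ :=
  ⟨mem_univ r, fun _ _ hv =>
    let ⟨w, hvw, hd⟩ := hG.exists_adj_dist_add_one_eq hv
    ⟨w, mem_univ w, hvw, hd⟩⟩

end SimpleGraph

namespace EquitableColoring

theorem exists_card_eq_equitable_add_indicator {ι : Type*} [Fintype ι] [DecidableEq ι]
    {s : ι → ℕ} {j : ι} (hs : ∀ i i', s i ≤ s i' + 1) (hj : ∀ i, s i ≤ s j) {k : ℕ}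
    (hk : k ≤ Fintype.card ι) :
    ∃ I : Finset ι, #I = k ∧
      (∀ i i', s i + (if i ∈ I then 1 else 0) ≤ s i' + (if i' ∈ I then 1 else 0) + 1) ∧
      ∀ i, s i + (if i ∈ I then 1 else 0) ≤ s j + (if j ∈ I then 1 else 0) := by
  -- increment the `k` smallest classes, breaking ties in favour of `j`
  obtain ⟨I, hI, hle⟩ := exists_card_eq_forall_le (fun i => 2 * s i + if i = j then 0 else 1) hk
  refine ⟨I, hI, fun i i' => ?_, fun i => ?_⟩
  · have := hs i i'
    have := hs i' i
    by_cases hi : i ∈ I <;> by_cases hi' : i' ∈ I <;> simp only [hi, hi', if_true, if_false]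
    all_goals try omega
    have := hle i hi i' hi'
    split_ifs at this <;> omega
  · have := hj i
    by_cases hi : i ∈ I <;> by_cases hjI : j ∈ I <;> simp only [hi, hjI, if_true, if_false]
    all_goals try omega
    have := hle i hi j hjI
    simp only [ne_of_mem_of_not_mem hi hjI, if_true, if_false] at this
    omega

variable {V ι : Type*} [DecidableEq ι]

def colorClass (W : Finset V) (c : V → Option ι) (i : ι) : Finset V := {x ∈ W | c x = some i}

@[simp]
theorem mem_colorClass {W : Finset V} {c : V → Option ι} {i : ι} {x : V} :
    x ∈ colorClass W c i ↔ x ∈ W ∧ c x = some i :=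
  mem_filter

-- `c v = none` marks `v` as uncoloured; `j` is a largest class, the only one `r` may lie in.
structure IsRootedColoring (G : SimpleGraph V) (r : V) (W : Finset V) (c : V → Option ι) (j : ι) :
    Prop where
  indep : ∀ i, ∀ x ∈ colorClass W c i, ∀ y ∈ colorClass W c i, ¬ G.Adj x y
  maximal : ∀ v ∈ W, c v = none → ∀ i, ∃ x ∈ colorClass W c i, G.Adj v x
  equitable : ∀ i i', #(colorClass W c i) ≤ #(colorClass W c i') + 1
  largest : ∀ i, #(colorClass W c i) ≤ #(colorClass W c j)
  root : ∀ i, c r = some i → i = j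

variable [DecidableEq V] {G : SimpleGraph V} {r p : V} {W C : Finset V} {c : V → Option ι}

structure IsPendantStar (G : SimpleGraph V) (W : Finset V) (p : V) (C : Finset V) : Prop where
  center_notMem : p ∉ W
  center_notMem_leaves : p ∉ C
  disjoint : Disjoint W C
  adj_center : ∀ w ∈ C, G.Adj w p
  leaf_not_adj : ∀ w ∈ C, ∀ x ∈ W ∪ C, ¬ G.Adj w x

def glue (c : V → Option ι) (p : V) (a : Option ι) (C : Finset V) (g : V → ι) : V → Option ι :=
  fun v => if v ∈ C then some (g v) else if v = p then a else c v

section glue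

variable {a : Option ι} {g : V → ι}

theorem mem_colorClass_glue (hS : IsPendantStar G W p C) {i : ι} {x : V} :
    x ∈ colorClass (W ∪ insert p C) (glue c p a C g) i ↔
      x ∈ colorClass W c i ∨ (x = p ∧ a = some i) ∨ (x ∈ C ∧ g x = i) := by
  by_cases hxC : x ∈ C
  · have hxW : x ∉ W := disjoint_right.1 hS.disjoint hxC
    have hxp : x ≠ p := ne_of_mem_of_not_mem hxC hS.center_notMem_leaves
    simp [glue, hxC, hxW, hxp]
  · by_cases hxp : x = p
    · subst hxp
      simp [glue, hxC, hS.center_notMem]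
    · simp [glue, hxC, hxp]

theorem card_colorClass_glue (hS : IsPendantStar G W p C) (i : ι) :
    #(colorClass (W ∪ insert p C) (glue c p a C g) i) =
      #(colorClass W c i) + #{w ∈ C | g w = i} + if a = some i then 1 else 0 := by
  have hW : {x ∈ W | glue c p a C g x = some i} = colorClass W c i :=
    filter_congr fun x hx => by
      rw [glue, if_neg (disjoint_left.1 hS.disjoint hx),
        if_neg (ne_of_mem_of_not_mem hx hS.center_notMem)]
  have hC : {x ∈ C | glue c p a C g x = some i} = {w ∈ C | g w = i} :=
    filter_congr fun x hx => by simp [glue, hx]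
  rw [colorClass, filter_union, card_union_of_disjoint (disjoint_filter_filter
    (disjoint_insert_right.2 ⟨hS.center_notMem, hS.disjoint⟩)), hW, filter_insert, hC]
  simp only [glue, if_neg hS.center_notMem_leaves, if_true]
  split_ifs
  · rw [card_insert_of_notMem fun h => hS.center_notMem_leaves (mem_filter.1 h).1, add_assoc]
  · rfl

theorem indep_glue (hS : IsPendantStar G W p C)
    (hc : ∀ i, ∀ x ∈ colorClass W c i, ∀ y ∈ colorClass W c i, ¬ G.Adj x y)
    (ha : ∀ i, a = some i → (∀ x ∈ colorClass W c i, ¬ G.Adj p x) ∧ ∀ w ∈ C, g w ≠ i) :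
    ∀ i, ∀ x ∈ colorClass (W ∪ insert p C) (glue c p a C g) i,
      ∀ y ∈ colorClass (W ∪ insert p C) (glue c p a C g) i, ¬ G.Adj x y := by
  intro i x hx y hy
  rw [mem_colorClass_glue hS] at hx hy
  have hW : ∀ x ∈ colorClass W c i, x ∈ W ∪ C := fun x hx =>
    mem_union_left _ (mem_colorClass.1 hx).1
  rcases hx with hx | ⟨rfl, hxa⟩ | ⟨hxC, hxg⟩ <;> rcases hy with hy | ⟨rfl, hya⟩ | ⟨hyC, hyg⟩
  · exact hc i x hx y hy
  · exact fun h => (ha i hya).1 x hx h.symm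
  · exact fun h => hS.leaf_not_adj y hyC x (hW x hx) h.symm
  · exact (ha i hxa).1 y hy
  · exact G.irrefl
  · exact fun _ => (ha i hxa).2 y hyC hyg
  · exact hS.leaf_not_adj x hxC y (hW y hy)
  · exact fun _ => (ha i hya).2 x hxC hxg
  · exact hS.leaf_not_adj x hxC y (mem_union_right _ hyC)

theorem maximal_glue (hS : IsPendantStar G W p C)
    (hc : ∀ v ∈ W, c v = none → ∀ i, ∃ x ∈ colorClass W c i, G.Adj v x)
    (ha : a = none → ∀ i, ∃ w ∈ C, g w = i) :
    ∀ v ∈ W ∪ insert p C, glue c p a C g v = none →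
      ∀ i, ∃ x ∈ colorClass (W ∪ insert p C) (glue c p a C g) i, G.Adj v x := by
  intro v hv hvc i
  simp only [mem_union, mem_insert] at hv
  rcases hv with hvW | rfl | hvC
  · have hvC : v ∉ C := disjoint_left.1 hS.disjoint hvW
    have hvp : v ≠ p := ne_of_mem_of_not_mem hvW hS.center_notMem
    simp only [glue, if_neg hvC, if_neg hvp] at hvc
    obtain ⟨x, hx, hvx⟩ := hc v hvW hvc i
    exact ⟨x, (mem_colorClass_glue hS).2 (Or.inl hx), hvx⟩
  · simp only [glue, if_neg hS.center_notMem_leaves, if_true] at hvc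
    obtain ⟨w, hwC, hwg⟩ := ha hvc i
    exact ⟨w, (mem_colorClass_glue hS).2 (Or.inr (Or.inr ⟨hwC, hwg⟩)), (hS.adj_center w hwC).symm⟩
  · simp [glue, hvC] at hvc

end glue

variable [Fintype ι] {j : ι}

theorem IsRootedColoring.exists_glue_uncolored (hc : IsRootedColoring G r W c j)
    (hS : IsPendantStar G W p C) (hrC : r ∉ C) (hC : Fintype.card ι ≤ #C) :
    ∃ (c' : V → Option ι) (j' : ι), IsRootedColoring G r (W ∪ insert p C) c' j' := by
  have : Nonempty ι := ⟨j⟩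
  have hι : 0 < Fintype.card ι := Fintype.card_pos
  obtain ⟨I, hI, hequi, hlarge⟩ := exists_card_eq_equitable_add_indicator hc.equitable hc.largest
    (Nat.mod_lt #C hι).le
  have hsum : ∑ i, (#C / Fintype.card ι + if i ∈ I then 1 else 0) = #C := by
    simp only [sum_add_distrib, sum_const, card_univ, smul_eq_mul, sum_boole, filter_mem_eq_inter,
      univ_inter, hI, Nat.cast_id]
    exact Nat.div_add_mod _ _
  obtain ⟨g, hg⟩ := exists_card_fiber_eq C _ hsum
  have hcard : ∀ i, #(colorClass (W ∪ insert p C) (glue c p none C g) i) =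
      #(colorClass W c i) + (if i ∈ I then 1 else 0) + #C / Fintype.card ι := by
    intro i
    rw [card_colorClass_glue hS, hg, if_neg (Option.some_ne_none i).symm]
    ring
  have hcover : ∀ i, ∃ w ∈ C, g w = i := fun i => by
    have : 0 < #{w ∈ C | g w = i} := by
      rw [hg]
      exact Nat.lt_add_right _ ((Nat.one_le_div_iff hι).2 hC)
    obtain ⟨w, hw⟩ := card_pos.1 this
    exact ⟨w, (mem_filter.1 hw)⟩
  refine ⟨glue c p none C g, j, ⟨indep_glue hS hc.indep (by simp), maximal_glue hS hc.maximal
    fun _ => hcover, fun i i' => ?_, fun i => ?_, fun i hi => ?_⟩⟩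
  · rw [hcard, hcard]; have := hequi i i'; omega
  · rw [hcard, hcard]; have := hlarge i; omega
  · by_cases hrp : r = p
    · subst hrp
      simp [glue, hrC] at hi
    · exact hc.root i (by simpa [glue, hrC, hrp] using hi)

theorem IsRootedColoring.exists_glue_colored (hc : IsRootedColoring G r W c j)
    (hS : IsPendantStar G W p C) {q : V} (hq : ∀ x ∈ W, G.Adj p x → x = q) (hrp : r ≠ p)
    (hrC : r ∉ C) (hC : C.Nonempty) (hCι : #C < Fintype.card ι) :
    ∃ (c' : V → Option ι) (j' : ι), IsRootedColoring G r (W ∪ insert p C) c' j' := by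
  have : Nonempty ι := ⟨j⟩
  obtain ⟨I, hI, hequi, hlarge⟩ :=
    exists_card_eq_equitable_add_indicator hc.equitable hc.largest (k := #C + 1) hCι
  -- `p` gets a colour `α ∈ I` not used by `q`, its only neighbour in `W`
  obtain ⟨α, hαI, hαq⟩ := I.exists_mem_ne (by rw [hI]; have := hC.card_pos; omega) ((c q).getD j)
  obtain ⟨g, hg⟩ := exists_card_fiber_eq C (fun i => if i ∈ I.erase α then 1 else 0) (by
    rw [sum_boole, filter_mem_eq_inter, univ_inter, card_erase_of_mem hαI, hI]; rfl)
  have hcard : ∀ i, #(colorClass (W ∪ insert p C) (glue c p (some α) C g) i) =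
      #(colorClass W c i) + if i ∈ I then 1 else 0 := by
    intro i
    rw [card_colorClass_glue hS, hg]
    by_cases hi : i = α
    · subst hi
      simp [hαI]
    · simp [hi, Ne.symm hi]
  refine ⟨glue c p (some α) C g, j, ⟨indep_glue hS hc.indep ?_,
    maximal_glue hS hc.maximal (by simp), fun i i' => ?_, fun i => ?_,
    fun i hi => hc.root i (by simpa [glue, hrC, hrp] using hi)⟩⟩
  · rintro i ⟨⟩
    refine ⟨fun x hx hpx => ?_, fun w hw hgw => ?_⟩
    · obtain ⟨hxW, hcx⟩ := mem_colorClass.1 hx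
      rw [hq x hxW hpx] at hcx
      simp [hcx] at hαq
    · have : 0 < #{w ∈ C | g w = α} := card_pos.2 ⟨w, mem_filter.2 ⟨hw, hgw⟩⟩
      simp [hg] at this
  · rw [hcard, hcard]; exact hequi i i'
  · rw [hcard, hcard]; exact hlarge i

theorem exists_isRootedColoring_of_card_le (hr : r ∈ W)
    (hW : #W ≤ Fintype.card ι) : ∃ (c : V → Option ι) (j : ι), IsRootedColoring G r W c j := by
  obtain ⟨I, -, hI⟩ := exists_subset_card_eq (s := (univ : Finset ι)) (n := #W) (by rwa [card_univ])
  have : Nonempty ι := Fintype.card_pos_iff.1 (by have := card_pos.2 ⟨r, hr⟩; omega)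
  obtain ⟨g, hg⟩ := exists_card_fiber_eq W (fun i => if i ∈ I then 1 else 0) (by
    rw [sum_boole, filter_mem_eq_inter, univ_inter, hI]; rfl)
  let c : V → Option ι := fun v => if v ∈ W then some (g v) else none
  have hle : ∀ i, #(colorClass W c i) ≤ 1 := fun i => by
    have : colorClass W c i = {x ∈ W | g x = i} := filter_congr fun x hx => by simp [c, hx]
    rw [this, hg]
    split_ifs <;> simp
  have hrj : 1 ≤ #(colorClass W c (g r)) := card_pos.2 ⟨r, by simp [c, hr]⟩
  refine ⟨c, g r, fun i x hx y hy => ?_, fun v hv hvc => by simp [c, hv] at hvc,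
    fun i i' => by have := hle i; omega, fun i => (hle i).trans hrj,
    fun i hi => by simpa [c, hr] using hi.symm⟩
  rw [card_le_one.1 (hle i) x hx y hy]
  exact G.irrefl

theorem exists_isRootedColoring_star [Nonempty ι] {L : Finset V}
    (hS : IsPendantStar G ∅ r L) :
    ∃ (c : V → Option ι) (j : ι), IsRootedColoring G r (insert r L) c j := by
  rcases le_or_gt (Fintype.card ι) #L with hL | hL
  · have hempty : IsRootedColoring G r ∅ (fun _ => none) (Classical.arbitrary ι) :=
      ⟨by simp, by simp, by simp [colorClass], by simp [colorClass], by simp⟩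
    simpa using hempty.exists_glue_uncolored hS hS.center_notMem_leaves hL
  · exact exists_isRootedColoring_of_card_le (mem_insert_self r L) ((card_insert_le r L).trans hL)

theorem isPendantStar_erase_of_dist_le_one (hT : G.IsTree) (hW : G.IsRootedSubtree r W)
    (h1 : ∀ v ∈ W, G.dist r v ≤ 1) : IsPendantStar G ∅ r (W.erase r) where
  center_notMem := notMem_empty r
  center_notMem_leaves := notMem_erase r W
  disjoint := disjoint_empty_left _
  adj_center w hw := by
    obtain ⟨hwr, hwW⟩ := mem_erase.1 hw
    obtain ⟨w', -, hww', hd⟩ := hW.2 w hwW hwr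
    have := h1 w hwW
    rwa [← hT.connected.dist_eq_zero_iff.1 (by omega : G.dist r w' = 0)] at hww'
  leaf_not_adj w hw x hx hwx := by
    rw [empty_union] at hx
    obtain ⟨hwr, hwW⟩ := mem_erase.1 hw
    obtain ⟨hxr, hxW⟩ := mem_erase.1 hx
    have := hT.connected.pos_dist_of_ne hwr.symm
    have := hT.connected.pos_dist_of_ne hxr.symm
    have := h1 w hwW
    have := h1 x hxW
    have := hT.dist_eq_dist_add_one_of_adj r hwx
    omega

theorem exists_isPendantStar_of_deepest (hT : G.IsTree) (hW : G.IsRootedSubtree r W)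
    {u : V} (hu : u ∈ W) (humax : ∀ v ∈ W, G.dist r v ≤ G.dist r u) (hu2 : 2 ≤ G.dist r u) :
    ∃ (W' C : Finset V) (p q : V), W = W' ∪ insert p C ∧ G.IsRootedSubtree r W' ∧
      IsPendantStar G W' p C ∧ C.Nonempty ∧ r ≠ p ∧ r ∉ C ∧ ∀ x ∈ W', G.Adj p x → x = q := by
  classical
  have hur : u ≠ r := by rintro rfl; simp at hu2
  obtain ⟨p, hpW, hup, hdp⟩ := hW.2 u hu hur
  have hpr : p ≠ r := by rintro rfl; simp at hdp; omega
  obtain ⟨q, -, hpq, hdq⟩ := hW.2 p hpW hpr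
  set C := {w ∈ W | G.Adj w p ∧ G.dist r p + 1 = G.dist r w}
  have hCd : ∀ w ∈ C, G.dist r w = G.dist r u := fun w hw => (mem_filter.1 hw).2.2 ▸ hdp
  have hleaf : ∀ w ∈ C, ∀ x ∈ W, G.Adj w x → x = p := fun w hw x hx hwx =>
    hT.eq_of_adj_of_dist_le r (mem_filter.1 hw).2.1 (mem_filter.1 hw).2.2 hwx
      (hCd w hw ▸ humax x hx)
  have hpC : p ∉ C := fun h => by have := hCd p h; omega
  have hrC : r ∉ C := fun h => by have := hCd r h; simp at this; omega
  have hW' : G.IsRootedSubtree r (W \ insert p C) := by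
    refine ⟨by simp [hW.1, hpr.symm, hrC], fun v hv hvr => ?_⟩
    obtain ⟨hvW, hvpC⟩ := mem_sdiff.1 hv
    obtain ⟨w, hwW, hvw, hdw⟩ := hW.2 v hvW hvr
    refine ⟨w, mem_sdiff.2 ⟨hwW, fun hwpC => ?_⟩, hvw, hdw⟩
    rcases mem_insert.1 hwpC with rfl | hwC
    · exact hvpC (mem_insert_of_mem (mem_filter.2 ⟨hvW, hvw, hdw⟩))
    · have := hCd w hwC
      have := humax v hvW
      omega
  have hS : IsPendantStar G (W \ insert p C) p C := by
    refine ⟨by simp, hpC, disjoint_sdiff_self_left.mono_right (subset_insert p C),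
      fun w hw => (mem_filter.1 hw).2.1, fun w hw x hx hwx => ?_⟩
    rcases mem_union.1 hx with hxW' | hxC
    · obtain ⟨hxW, hxpC⟩ := mem_sdiff.1 hxW'
      exact hxpC (hleaf w hw x hxW hwx ▸ mem_insert_self p C)
    · exact hpC (hleaf w hw x (mem_filter.1 hxC).1 hwx ▸ hxC)
  refine ⟨_, C, p, q, (sdiff_union_of_subset (insert_subset hpW (filter_subset _ _))).symm, hW', hS,
    ⟨u, mem_filter.2 ⟨hu, hup, hdp⟩⟩, hpr.symm, hrC, fun x hx hpx => ?_⟩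
  obtain ⟨hxW, hxpC⟩ := mem_sdiff.1 hx
  by_cases hxC : G.dist r p + 1 = G.dist r x
  · exact absurd (mem_insert_of_mem (mem_filter.2 ⟨hxW, hpx.symm, hxC⟩)) hxpC
  · refine hT.eq_of_adj_of_dist_le r hpq hdq hpx ?_
    rcases hT.dist_eq_dist_add_one_of_adj r hpx with h | h <;> omega

theorem exists_isRootedColoring_of_isRootedSubtree [Nonempty ι] (hT : G.IsTree) (W : Finset V)
    (hW : G.IsRootedSubtree r W) : ∃ (c : V → Option ι) (j : ι), IsRootedColoring G r W c j := by
  induction W using Finset.strongInduction with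
  | H W ih =>
  obtain ⟨u, hu, humax⟩ := W.exists_max_image (G.dist r) ⟨r, hW.1⟩
  by_cases hu1 : G.dist r u ≤ 1
  · rw [← insert_erase hW.1]
    exact exists_isRootedColoring_star
      (isPendantStar_erase_of_dist_le_one hT hW fun v hv => (humax v hv).trans hu1)
  obtain ⟨W', C, p, q, rfl, hW', hS, hC, hrp, hrC, hq⟩ :=
    exists_isPendantStar_of_deepest hT hW hu humax (by omega)
  obtain ⟨c, j, hc⟩ := ih W' (ssubset_iff.2 ⟨p, hS.center_notMem,
    insert_subset (mem_union_right _ (mem_insert_self p C)) subset_union_left⟩) hW'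
  rcases le_or_gt (Fintype.card ι) #C with hCι | hCι
  · exact hc.exists_glue_uncolored hS hrC hCι
  · exact hc.exists_glue_colored hS hq hrp hrC hC hCι

end EquitableColoring

open EquitableColoring in
/-- every finite tree with a distinguished root r admits a maximal equitable
n-coloring in which r is either uncolored or receives a color class of maximum size. -/
theorem stmt_19 {V : Type*} [Fintype V] [DecidableEq V] (G : SimpleGraph V)
    (hT : G.IsTree) (r : V) (n : ℕ) (hn : 0 < n) :
    ∃ S : Fin n → Finset V,
      (∀ i j : Fin n, i ≠ j → Disjoint (S i) (S j)) ∧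
      (∀ i : Fin n, ∀ x ∈ S i, ∀ y ∈ S i, ¬ G.Adj x y) ∧
      (∀ v : V, (∀ i : Fin n, v ∉ S i) → ∀ i : Fin n, ∃ x ∈ S i, G.Adj v x) ∧
      (∀ i j : Fin n, (S i).card ≤ (S j).card + 1) ∧
      ((∀ i : Fin n, r ∉ S i) ∨
        ∃ i : Fin n, r ∈ S i ∧ ∀ j : Fin n, (S j).card ≤ (S i).card) := by
  have : Nonempty (Fin n) := ⟨⟨0, hn⟩⟩
  obtain ⟨c, j, hc⟩ := exists_isRootedColoring_of_isRootedSubtree (ι := Fin n) hT univ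
    (hT.connected.isRootedSubtree_univ r)
  refine ⟨colorClass univ c, fun i i' hii' => ?_, hc.indep,
    fun v hv => hc.maximal v (mem_univ v) ?_, hc.equitable, ?_⟩
  · exact disjoint_left.2 fun x hx hx' =>
      hii' (Option.some_injective _ ((mem_colorClass.1 hx).2.symm.trans (mem_colorClass.1 hx').2))
  · exact Option.eq_none_iff_forall_ne_some.2 fun i hi => hv i (mem_colorClass.2 ⟨mem_univ v, hi⟩)
  · rcases hcr : c r with _ | i
    · exact Or.inl fun i hi => by simp [hcr] at hi
    · obtain rfl := hc.root i hcr
      exact Or.inr ⟨i, mem_colorClass.2 ⟨mem_univ r, hcr⟩, hc.largest⟩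
end
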